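/- arXiv:2302.05139 — 8 statements merged into one kernel-verified Lean document; each statement's English description precedes it below -/
import Mathlib

section
/- Let η̃ > η > 0, let c, q, μ̂, Z : S → ℝ, τ > 0, K > 0, and set G(s) = (μ̂(s) − μ(s))/(τ·σ(s)). Assume: (far zone) for every s ∈ S with |μ(s) − c(s)| > η̃ one has (μ̂(s) − c(s))·sgn(μ(s) − c(s)) ≥ σ(s)·(K + Z(s)); (a) for every s with 0 ≤ μ(s) − c(s) ≤ η, G(s) + q(s) > 0; (b) for every s with 0 ≤ μ(s) − c(s) ≤ η̃, G(s) + q(s) > −η/(τ·𝔒); (c) for every s ∈ S, Z(s)/τ + q(s) > −K/τ. Then {s : μ̂(s) < c(s) − q(s)·τ·σ(s)} ⊆ {s : μ(s) < c(s)}, and {s : μ(s) > c(s)} ⊆ {s : μ̂(s) > c(s) − q(s)·τ·σ(s)}. (Paper: Lemma A.2 (SCoPES Lemma), part (i).) -/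
/-- Lemma A.2 (SCoPES Lemma), part (i). -/
theorem scopes_lemma_part_i
    {S : Type*} [MetricSpace S]
    (μ σ c q μhat Z : S → ℝ) (o O τ K η ηt : ℝ)
    (ho : 0 < o) (hσo : ∀ s, o ≤ σ s) (hσO : ∀ s, σ s ≤ O)
    (hμbd : ∃ M, ∀ s, |μ s| ≤ M)
    (hτ : 0 < τ) (hK : 0 < K) (hη : 0 < η) (hηηt : η < ηt)
    (hfar : ∀ s, ηt < |μ s - c s| →
      (μhat s - c s) * Real.sign (μ s - c s) ≥ σ s * (K + Z s))
    (ha : ∀ s, 0 ≤ μ s - c s → μ s - c s ≤ η →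
      (μhat s - μ s) / (τ * σ s) + q s > 0)
    (hb : ∀ s, 0 ≤ μ s - c s → μ s - c s ≤ ηt →
      (μhat s - μ s) / (τ * σ s) + q s > -(η / (τ * O)))
    (hc : ∀ s, Z s / τ + q s > -(K / τ)) :
    {s | μhat s < c s - q s * τ * σ s} ⊆ {s | μ s < c s} ∧
    {s | μ s > c s} ⊆ {s | μhat s > c s - q s * τ * σ s} := by
  have key : ∀ s, 0 ≤ μ s - c s → μhat s > c s - q s * τ * σ s := by
    intro s hs
    have hσs : 0 < σ s := lt_of_lt_of_le ho (hσo s)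
    have ht : 0 < τ * σ s := mul_pos hτ hσs
    have htne : τ * σ s ≠ 0 := ne_of_gt ht
    have hO : 0 < O := lt_of_lt_of_le hσs (hσO s)
    rcases le_or_gt (μ s - c s) η with h1 | h1
    · have h := ha s hs h1
      have h2 : ((μhat s - μ s) / (τ * σ s) + q s) * (τ * σ s) > 0 := mul_pos h ht
      rw [add_mul, div_mul_cancel₀ _ htne] at h2
      nlinarith
    · rcases le_or_gt (μ s - c s) ηt with h3 | h3
      · have h := hb s hs h3
        have h2 : ((μhat s - μ s) / (τ * σ s) + q s) * (τ * σ s) >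
            -(η / (τ * O)) * (τ * σ s) := by
          exact (mul_lt_mul_of_pos_right h ht)
        rw [add_mul, div_mul_cancel₀ _ htne] at h2
        have h4 : -(η / (τ * O)) * (τ * σ s) ≥ -η := by
          rw [ge_iff_le, neg_mul, neg_le_neg_iff, div_mul_eq_mul_div, div_le_iff₀ (by positivity)]
          gcongr
          exact hσO s
        nlinarith
      · have habs : ηt < |μ s - c s| := by
          rw [abs_of_nonneg hs]; exact h3
        have hsgn : Real.sign (μ s - c s) = 1 :=
          Real.sign_of_pos (by linarith)
        have h := hfar s habs
        rw [hsgn, mul_one] at h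
        have hcs := hc s
        have h5 : Z s + q s * τ > -K := by
          have := mul_lt_mul_of_pos_right hcs hτ
          rw [add_mul, div_mul_cancel₀ _ (ne_of_gt hτ), neg_mul, div_mul_cancel₀ _ (ne_of_gt hτ)] at this
          linarith
        nlinarith
  constructor
  · intro s hmem
    simp only [Set.mem_setOf_eq] at *
    by_contra hcon
    push_neg at hcon
    exact absurd hmem (not_lt.mpr (le_of_lt (key s (by linarith))))
  · intro s hmem
    simp only [Set.mem_setOf_eq] at *
    exact key s (by linarith)
end

section
/- Let η̃ > η > 0, let c, q, μ̂, Z : S → ℝ, τ > 0, K > 0, and set G(s) = (μ̂(s) − μ(s))/(τ·σ(s)). Assume: (far zone) for every s ∈ S with |μ(s) − c(s)| > η̃ one has (μ̂(s) − c(s))·sgn(μ(s) − c(s)) ≥ σ(s)·(K + Z(s)); (a) for every s with 0 ≤ c(s) − μ(s) ≤ η, G(s) − q(s) < 0; (b) for every s with 0 ≤ c(s) − μ(s) ≤ η̃, G(s) − q(s) < η/(τ·𝔒); (c) for every s ∈ S, Z(s)/τ + q(s) > −K/τ. Then {s : μ̂(s) > c(s) + q(s)·τ·σ(s)} ⊆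 {s : μ(s) > c(s)}, and {s : μ(s) < c(s)} ⊆ {s : μ̂(s) < c(s) + q(s)·τ·σ(s)}. (Paper: Lemma A.2 (SCoPES Lemma), part (ii).) -/
/-! Both inclusions reduce to: `μ s ≤ c s` forces `μhat s < c s + q s * τ * σ s`. Split by the
gap `c s - μ s`: up to `η`, (a) gives it directly; up to `η̃`, (b) loses at most `η σ / 𝔒 ≤ η`,
which the gap absorbs; beyond `η̃`, the far-zone bound with `sgn = -1` combined with (c) gives it. -/

theorem lt_add_mul_of_div_sub_lt {x m c q t δ : ℝ} (ht : 0 < t)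
    (h : (x - m) / t - q < δ) (hδ : δ * t ≤ c - m) : x < c + q * t := by
  have : x - m < (q + δ) * t := (div_lt_iff₀ ht).1 (by linarith)
  linarith

theorem lt_add_mul_mul_of_neg_mul_ge {x c q σ τ K Z : ℝ} (hτ : 0 < τ) (hσ : 0 < σ)
    (hfar : (x - c) * (-1) ≥ σ * (K + Z)) (hc : Z / τ + q > -(K / τ)) :
    x < c + q * (τ * σ) := by
  have hKZ : -(q * τ) < K + Z := by
    have := (mul_lt_mul_iff_of_pos_right hτ).2 hc
    rw [neg_mul, add_mul, div_mul_cancel₀ _ hτ.ne', div_mul_cancel₀ _ hτ.ne'] at this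
    linarith
  nlinarith [mul_lt_mul_of_pos_left hKZ hσ]

theorem scopes_lemma_part_ii_general
    {S : Type*}
    (μ σ c q μhat Z : S → ℝ) (o O τ K η ηt : ℝ)
    (ho : 0 < o) (hσo : ∀ s, o ≤ σ s) (hσO : ∀ s, σ s ≤ O)
    (hτ : 0 < τ) (hη : 0 < η)
    (hfar : ∀ s, ηt < |μ s - c s| →
      (μhat s - c s) * Real.sign (μ s - c s) ≥ σ s * (K + Z s))
    (ha : ∀ s, 0 ≤ c s - μ s → c s - μ s ≤ η →
      (μhat s - μ s) / (τ * σ s) - q s < 0)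
    (hb : ∀ s, 0 ≤ c s - μ s → c s - μ s ≤ ηt →
      (μhat s - μ s) / (τ * σ s) - q s < η / (τ * O))
    (hc : ∀ s, Z s / τ + q s > -(K / τ)) :
    {s | μhat s > c s + q s * τ * σ s} ⊆ {s | μ s > c s} ∧
    {s | μ s < c s} ⊆ {s | μhat s < c s + q s * τ * σ s} := by
  have key : ∀ s, μ s ≤ c s → μhat s < c s + q s * τ * σ s := by
    intro s hle
    have hσ : 0 < σ s := ho.trans_le (hσo s)
    have hτσ : 0 < τ * σ s := mul_pos hτ hσ
    have hgap : 0 ≤ c s - μ s := sub_nonneg.2 hle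
    rw [mul_assoc]
    rcases le_or_gt (c s - μ s) η with hnear | hpast
    · exact lt_add_mul_of_div_sub_lt hτσ (ha s hgap hnear) (by simpa using hgap)
    rcases le_or_gt (c s - μ s) ηt with hmid | hfar'
    · refine lt_add_mul_of_div_sub_lt hτσ (hb s hgap hmid) ?_
      have hO : 0 < O := hσ.trans_le (hσO s)
      calc η / (τ * O) * (τ * σ s) = η * (σ s / O) := by field_simp
        _ ≤ η * 1 := by gcongr; exact div_le_one_of_le₀ (hσO s) hO.le
        _ ≤ c s - μ s := by linarith
    · have hneg : μ s - c s < 0 := by linarith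
      have h := hfar s (by rwa [abs_of_neg hneg, neg_sub])
      rw [Real.sign_of_neg hneg] at h
      exact lt_add_mul_mul_of_neg_mul_ge hτ hσ h (hc s)
  exact ⟨fun s hs => lt_of_not_ge fun hle => lt_asymm (key s hle) hs,
    fun s hs => key s hs.le⟩

/-- Lemma A.2 (SCoPES Lemma), part (ii). -/
theorem scopes_lemma_part_ii
    {S : Type*} [MetricSpace S]
    (μ σ c q μhat Z : S → ℝ) (o O τ K η ηt : ℝ)
    (ho : 0 < o) (hσo : ∀ s, o ≤ σ s) (hσO : ∀ s, σ s ≤ O)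
    (hμbd : ∃ M, ∀ s, |μ s| ≤ M)
    (hτ : 0 < τ) (hK : 0 < K) (hη : 0 < η) (hηηt : η < ηt)
    (hfar : ∀ s, ηt < |μ s - c s| →
      (μhat s - c s) * Real.sign (μ s - c s) ≥ σ s * (K + Z s))
    (ha : ∀ s, 0 ≤ c s - μ s → c s - μ s ≤ η →
      (μhat s - μ s) / (τ * σ s) - q s < 0)
    (hb : ∀ s, 0 ≤ c s - μ s → c s - μ s ≤ ηt →
      (μhat s - μ s) / (τ * σ s) - q s < η / (τ * O))
    (hc : ∀ s, Z s / τ + q s > -(K / τ)) :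
    {s | μhat s > c s + q s * τ * σ s} ⊆ {s | μ s > c s} ∧
    {s | μ s < c s} ⊆ {s | μhat s < c s + q s * τ * σ s} :=
  scopes_lemma_part_ii_general μ σ c q μhat Z o O τ K η ηt ho hσo hσO hτ hη hfar ha hb hc
end

section
/- Let (S, d) be a metric space, A ⊆ S nonempty, and (A_N) a decreasing sequence of subsets with A ⊆ A_{N+1} ⊆ A_N ⊆ A_1 for all N, such that there are ε_N → 0 with every point of A_N within distance ε_N of A. Let f : S → ℝ be bounded on A_1 and satisfy the following uniform continuity condition near the boundary: for every ε > 0 there is δ > 0 such that |f(s) − f(t)| < ε whenever s ∈ A_1 \ interior(A), t ∈ A_1 and d(s, t) < δ. Then sup_{s ∈ A_N} f(s) → sup_{t ∈ A} f(t) as N → ∞. (Paper: Lemma A.3 (lem:ConvergenceMaxima), part (iii).) -/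
/-!
`sSup (f '' A) ≤ sSup (f '' A_N)` always, since `A ⊆ A_N`. Conversely, a point `s ∈ A_N` either lies
in `interior A`, so `f s ≤ sSup (f '' A)`, or it lies within `ε_N` of some `t ∈ A`, and once `ε_N`
is below the `δ` of the uniform continuity condition, `f s < f t + e ≤ sSup (f '' A) + e`.
-/

open Filter Set Topology

theorem tendsto_of_forall_le_of_eventually_le_add {α 𝕜 : Type*} [Field 𝕜] [LinearOrder 𝕜]
    [IsStrictOrderedRing 𝕜] [TopologicalSpace 𝕜] [OrderTopology 𝕜] {l : Filter α} {u : α → 𝕜}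
    {L : 𝕜} (hle : ∀ a, L ≤ u a) (hu : ∀ e > 0, ∀ᶠ a in l, u a ≤ L + e) :
    Tendsto u l (𝓝 L) := by
  refine tendsto_order.2 ⟨fun b hb => .of_forall fun a => hb.trans_le (hle a), fun b hb => ?_⟩
  filter_upwards [hu ((b - L) / 2) (by linarith)] with a ha
  linarith

theorem sSup_image_le_add_of_forall_near {S : Type*} [PseudoMetricSpace S] {f : S → ℝ}
    {A B : Set S} {e δ : ℝ} (hB : B.Nonempty) (hbdd : BddAbove (f '' A)) (he : 0 ≤ e)
    (hnear : ∀ s ∈ B, ∃ t ∈ A, dist s t < δ)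
    (hcont : ∀ s ∈ B \ interior A, ∀ t ∈ A, dist s t < δ → f s ≤ f t + e) :
    sSup (f '' B) ≤ sSup (f '' A) + e := by
  refine csSup_le (hB.image f) (forall_mem_image.2 fun s hs => ?_)
  by_cases hint : s ∈ interior A
  · have := le_csSup hbdd (mem_image_of_mem f (interior_subset hint))
    linarith
  · obtain ⟨t, ht, hst⟩ := hnear s hs
    have := le_csSup hbdd (mem_image_of_mem f ht)
    linarith [hcont s ⟨hs, hint⟩ t ht hst]

/-- Lemma A.3 (lem:ConvergenceMaxima), part (iii). -/
theorem sup_tendsto_of_shrinking_sets {S : Type*} [MetricSpace S]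
    (A : Set S) (hA : A.Nonempty) (Aseq : ℕ → Set S)
    (hdec : ∀ N, Aseq (N + 1) ⊆ Aseq N) (hsub : ∀ N, A ⊆ Aseq N)
    (ε : ℕ → ℝ) (hε : Tendsto ε atTop (nhds 0))
    (hclose : ∀ N, ∀ s ∈ Aseq N, ∃ t ∈ A, dist s t ≤ ε N)
    (f : S → ℝ) (hbd : ∃ M, ∀ s ∈ Aseq 0, |f s| ≤ M)
    (hcont : ∀ e > 0, ∃ δ > 0, ∀ s ∈ Aseq 0 \ interior A, ∀ t ∈ Aseq 0,
      dist s t < δ → |f s - f t| < e) :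
    Tendsto (fun N => sSup (f '' Aseq N)) atTop (nhds (sSup (f '' A))) := by
  have hanti : Antitone Aseq := antitone_nat_of_succ_le hdec
  obtain ⟨M, hM⟩ := hbd
  have hbdd : BddAbove (f '' Aseq 0) := ⟨M, forall_mem_image.2 fun s hs => (abs_le.1 (hM s hs)).2⟩
  refine tendsto_of_forall_le_of_eventually_le_add (fun N => csSup_le_csSup
    (hbdd.mono (image_mono (hanti N.zero_le))) (hA.image f) (image_mono (hsub N))) fun e he => ?_
  obtain ⟨δ, hδ, hcont⟩ := hcont e he
  filter_upwards [hε.eventually (gt_mem_nhds hδ)] with N hN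
  refine sSup_image_le_add_of_forall_near (δ := δ) (hA.mono (hsub N)) (hbdd.mono (image_mono (hsub 0)))
    he.le (fun s hs => ?_) (fun s hs t ht hst => ?_)
  · obtain ⟨t, ht, hst⟩ := hclose N s hs
    exact ⟨t, ht, hst.trans_lt hN⟩
  · have := (abs_lt.1 (hcont s ⟨hanti N.zero_le hs.1, hs.2⟩ t (hsub 0 ht) hst)).2
    linarith
end

section
/- Let (S, d) be a metric space, A ⊆ S nonempty, and (A_N) a decreasing sequence of subsets with A ⊆ A_{N+1} ⊆ A_N ⊆ A_1 for all N, such that there are ε_N → 0 with every point of A_N within distance ε_N of A. Let f : S → ℝ be bounded on A_1 and satisfy: for every ε > 0 there is δ > 0 such that |f(s) − f(t)| < ε whenever s ∈ A_1 \ interior(A), t ∈ A_1 and d(s, t) < δ. Let (f_N) be a sequence of functions, bounded on A_1, with sup_{s ∈ A_1} |f_N(s) − f(s)| → 0. Then sup_{s ∈ A_N} f_N(s) → sup_{t ∈ A} f(t) as N → ∞. (Paper: Lemma A.3 (lem:ConvergenceMaxima), part (iv).) -/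
/-!
Split `sup_{A_N} f_N - sup_A f` as `(sup_{A_N} f_N - sup_{A_N} f) + (sup_{A_N} f - sup_A f)`.
The first term is at most `sup |f_N - f|`. For the second, `A ⊆ A_N` gives `sup_A f ≤ sup_{A_N} f`;
conversely a point of `A_N` either lies in `interior A`, or lies within `ε_N` of some point of `A`
where, by the continuity of `f` at points off `interior A`, `f` is almost as large.
-/

open Filter Set Topology

theorem csSup_image_le_csSup_image_add {α β : Type*} {f : α → ℝ} {g : β → ℝ} {B : Set α}
    {C : Set β} {e : ℝ} (hB : B.Nonempty) (hC : BddAbove (g '' C))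
    (h : ∀ s ∈ B, ∃ t ∈ C, f s ≤ g t + e) : sSup (f '' B) ≤ sSup (g '' C) + e := by
  refine csSup_le (hB.image f) ?_
  rintro _ ⟨s, hs, rfl⟩
  obtain ⟨t, ht, hst⟩ := h s hs
  exact hst.trans (add_le_add_left (le_csSup hC (mem_image_of_mem g ht)) e)

theorem abs_csSup_image_sub_csSup_image_le {α : Type*} {f g : α → ℝ} {B : Set α} {e : ℝ}
    (hB : B.Nonempty) (hf : BddAbove (f '' B)) (h : ∀ s ∈ B, |g s - f s| ≤ e) :
    |sSup (g '' B) - sSup (f '' B)| ≤ e := by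
  have hg : BddAbove (g '' B) := by
    obtain ⟨M, hM⟩ := hf
    refine ⟨M + e, ?_⟩
    rintro _ ⟨s, hs, rfl⟩
    linarith [hM (mem_image_of_mem f hs), (abs_le.mp (h s hs)).2]
  rw [abs_sub_le_iff, sub_le_iff_le_add', sub_le_iff_le_add']
  constructor
  · exact csSup_image_le_csSup_image_add hB hf fun s hs =>
      ⟨s, hs, by linarith [(abs_le.mp (h s hs)).2]⟩
  · exact csSup_image_le_csSup_image_add hB hg fun s hs =>
      ⟨s, hs, by linarith [(abs_le.mp (h s hs)).1]⟩

theorem tendsto_csSup_image_sub_csSup_image_of_uniform {α : Type*} {B : Set α}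
    {Aseq : ℕ → Set α} {f : α → ℝ} {fN : ℕ → α → ℝ} (hne : ∀ N, (Aseq N).Nonempty)
    (hB : ∀ N, Aseq N ⊆ B) (hf : BddAbove (f '' B))
    (hunif : ∀ e > 0, ∃ N₀, ∀ N ≥ N₀, ∀ s ∈ B, |fN N s - f s| ≤ e) :
    Tendsto (fun N => sSup (fN N '' Aseq N) - sSup (f '' Aseq N)) atTop (𝓝 0) := by
  refine Metric.tendsto_atTop.2 fun e he => ?_
  obtain ⟨N₀, hN₀⟩ := hunif (e / 2) (half_pos he)
  refine ⟨N₀, fun N hN => ?_⟩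
  rw [Real.dist_eq, sub_zero]
  exact (abs_csSup_image_sub_csSup_image_le (hne N) (hf.mono (image_mono (hB N)))
    fun s hs => hN₀ N hN s (hB N hs)).trans_lt (half_lt_self he)

theorem tendsto_csSup_image_of_shrinking {S : Type*} [PseudoMetricSpace S] {A B : Set S}
    {Aseq : ℕ → Set S} {ε : ℕ → ℝ} {f : S → ℝ} (hA : A.Nonempty) (hsub : ∀ N, A ⊆ Aseq N)
    (hB : ∀ N, Aseq N ⊆ B) (hε : Tendsto ε atTop (𝓝 0))
    (hclose : ∀ N, ∀ s ∈ Aseq N, ∃ t ∈ A, dist s t ≤ ε N) (hf : BddAbove (f '' B))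
    (hcont : ∀ e > 0, ∃ δ > 0, ∀ s ∈ B \ interior A, ∀ t ∈ B, dist s t < δ → |f s - f t| < e) :
    Tendsto (fun N => sSup (f '' Aseq N)) atTop (𝓝 (sSup (f '' A))) := by
  have hfA : BddAbove (f '' A) := hf.mono (image_mono ((hsub 0).trans (hB 0)))
  have lower : ∀ N, sSup (f '' A) ≤ sSup (f '' Aseq N) := fun N =>
    csSup_le_csSup (hf.mono (image_mono (hB N))) (hA.image f) (image_mono (hsub N))
  have upper : ∀ e > 0, ∀ᶠ N in atTop, sSup (f '' Aseq N) ≤ sSup (f '' A) + e := by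
    intro e he
    obtain ⟨δ, hδ, hfδ⟩ := hcont e he
    filter_upwards [hε.eventually (gt_mem_nhds hδ)] with N hN
    refine csSup_image_le_csSup_image_add (hA.mono (hsub N)) hfA fun s hs => ?_
    by_cases hsA : s ∈ interior A
    · exact ⟨s, interior_subset hsA, by linarith⟩
    · obtain ⟨t, ht, hst⟩ := hclose N s hs
      have hft := hfδ s ⟨hB N hs, hsA⟩ t (hB N (hsub N ht)) (hst.trans_lt hN)
      exact ⟨t, ht, by linarith [(abs_lt.mp hft).2]⟩
  refine tendsto_order.2 ⟨fun a ha => .of_forall fun N => ha.trans_le (lower N), fun a ha => ?_⟩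
  filter_upwards [upper _ (half_pos (sub_pos.2 ha))] with N hN
  linarith

theorem sup_tendsto_of_shrinking_sets_and_uniform_convergence_general {S : Type*} [MetricSpace S]
    (A : Set S) (hA : A.Nonempty) (Aseq : ℕ → Set S)
    (hdec : ∀ N, Aseq (N + 1) ⊆ Aseq N) (hsub : ∀ N, A ⊆ Aseq N)
    (ε : ℕ → ℝ) (hε : Tendsto ε atTop (nhds 0))
    (hclose : ∀ N, ∀ s ∈ Aseq N, ∃ t ∈ A, dist s t ≤ ε N)
    (f : S → ℝ) (hbd : ∃ M, ∀ s ∈ Aseq 0, |f s| ≤ M)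
    (hcont : ∀ e > 0, ∃ δ > 0, ∀ s ∈ Aseq 0 \ interior A, ∀ t ∈ Aseq 0,
      dist s t < δ → |f s - f t| < e)
    (fN : ℕ → S → ℝ)
    (hunif : ∀ e > 0, ∃ N₀, ∀ N ≥ N₀, ∀ s ∈ Aseq 0, |fN N s - f s| ≤ e) :
    Tendsto (fun N => sSup (fN N '' Aseq N)) atTop (nhds (sSup (f '' A))) := by
  have hmono : ∀ N, Aseq N ⊆ Aseq 0 := fun N => antitone_nat_of_succ_le hdec (Nat.zero_le N)
  have hf : BddAbove (f '' Aseq 0) := by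
    obtain ⟨M, hM⟩ := hbd
    refine ⟨M, ?_⟩
    rintro _ ⟨s, hs, rfl⟩
    exact (le_abs_self _).trans (hM s hs)
  simpa using (tendsto_csSup_image_sub_csSup_image_of_uniform (fun N => hA.mono (hsub N)) hmono
    hf hunif).add (tendsto_csSup_image_of_shrinking hA hsub hmono hε hclose hf hcont)

/-- Lemma A.3 (lem:ConvergenceMaxima), part (iv). -/
theorem sup_tendsto_of_shrinking_sets_and_uniform_convergence {S : Type*} [MetricSpace S]
    (A : Set S) (hA : A.Nonempty) (Aseq : ℕ → Set S)
    (hdec : ∀ N, Aseq (N + 1) ⊆ Aseq N) (hsub : ∀ N, A ⊆ Aseq N)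
    (ε : ℕ → ℝ) (hε : Tendsto ε atTop (nhds 0))
    (hclose : ∀ N, ∀ s ∈ Aseq N, ∃ t ∈ A, dist s t ≤ ε N)
    (f : S → ℝ) (hbd : ∃ M, ∀ s ∈ Aseq 0, |f s| ≤ M)
    (hcont : ∀ e > 0, ∃ δ > 0, ∀ s ∈ Aseq 0 \ interior A, ∀ t ∈ Aseq 0,
      dist s t < δ → |f s - f t| < e)
    (fN : ℕ → S → ℝ) (hfNbd : ∀ N, ∃ M, ∀ s ∈ Aseq 0, |fN N s| ≤ M)
    (hunif : ∀ e > 0, ∃ N₀, ∀ N ≥ N₀, ∀ s ∈ Aseq 0, |fN N s - f s| ≤ e) :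
    Tendsto (fun N => sSup (fN N '' Aseq N)) atTop (nhds (sSup (f '' A))) :=
  sup_tendsto_of_shrinking_sets_and_uniform_convergence_general A hA Aseq hdec hsub ε hε hclose f
    hbd hcont fN hunif
end

section
/- Let K ≥ 2, let a, w ∈ ℝ^K (Euclidean space) with a ≠ 0, and let l ∈ ℝ with l² ≤ ‖a‖². Let P_E denote the orthogonal projection onto the hyperplane E = {x ∈ ℝ^K : ⟨a, x⟩ = 0} (the orthogonal complement of the span of a). Then for each choice of sign ±, the value ± l·⟨a, w⟩/‖a‖² + √(1 − l²/‖a‖²)·‖P_E w‖ is the maximum (attained supremum) of ± ⟨x, w⟩ over the set {x ∈ ℝ^K : ‖x‖ = 1 and ⟨a, x⟩ = l}. (Paper: Lemma lemma:maxScalarProduct, part a).) -/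
/-!
Write `P` for the orthogonal projection onto `(ℝ ∙ a)ᗮ`. Splitting `x` along `a` and `(ℝ ∙ a)ᗮ`
gives `⟪x, w⟫ = ⟪a, x⟫ ⟪a, w⟫ / ‖a‖² + ⟪P x, P w⟫` and `‖x‖² = ⟪a, x⟫² / ‖a‖² + ‖P x‖²`.
On the slice `‖x‖ = 1, ⟪a, x⟫ = l` the first summand is fixed and `‖P x‖ = √(1 - l² / ‖a‖²)`,
so Cauchy–Schwarz bounds `⟪P x, P w⟫` by `√(1 - l² / ‖a‖²) ‖P w‖`, with equality when `P x`
points along `P w`; when `P w = 0` any unit vector of `(ℝ ∙ a)ᗮ` will do, and this is where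
dimension at least two enters. The sign `e` is absorbed by replacing `w` with `e • w`.
-/

open RealInnerProductSpace

variable {E : Type*} [NormedAddCommGroup E] [InnerProductSpace ℝ E]

theorem orthogonal_span_singleton_ne_bot [FiniteDimensional ℝ E]
    (hE : 2 ≤ Module.finrank ℝ E) (a : E) : (ℝ ∙ a)ᗮ ≠ ⊥ := by
  rw [Ne, Submodule.orthogonal_eq_bot_iff]
  intro htop
  have := finrank_span_le_card (R := ℝ) ({a} : Set E)
  rw [htop, finrank_top] at this
  simp only [Set.toFinset_singleton, Finset.card_singleton] at this
  omega

theorem Submodule.exists_norm_eq_one_inner_eq_norm {S : Submodule ℝ E} (hS : S ≠ ⊥)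
    {v : E} (hv : v ∈ S) : ∃ u ∈ S, ‖u‖ = 1 ∧ ⟪u, v⟫ = ‖v‖ := by
  obtain ⟨z, hzS, hz⟩ : ∃ z ∈ S, z ≠ 0 ∧ ⟪z, v⟫ = ‖z‖ * ‖v‖ := by
    by_cases hv0 : v = 0
    · obtain ⟨z, hzS, hz⟩ := exists_mem_ne_zero_of_ne_bot hS
      exact ⟨z, hzS, hz, by simp [hv0]⟩
    · exact ⟨v, hv, hv0, real_inner_self_eq_norm_mul_norm v⟩
  refine ⟨‖z‖⁻¹ • z, S.smul_mem _ hzS, norm_smul_inv_norm hz.1, ?_⟩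
  rw [real_inner_smul_left, hz.2, inv_mul_cancel_left₀ (norm_ne_zero_iff.mpr hz.1)]

theorem real_inner_eq_add_inner_starProjection_orthogonal (a x w : E) :
    ⟪x, w⟫ = ⟪a, x⟫ * ⟪a, w⟫ / ‖a‖ ^ 2 +
      ⟪(ℝ ∙ a)ᗮ.starProjection x, (ℝ ∙ a)ᗮ.starProjection w⟫ := by
  have hP : ⟪(ℝ ∙ a)ᗮ.starProjection x, (ℝ ∙ a)ᗮ.starProjection w⟫ =
      ⟪(ℝ ∙ a)ᗮ.starProjection x, w⟫ := by
    rw [← Submodule.inner_starProjection_left_eq_right,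
      Submodule.starProjection_eq_self_iff.mpr (Submodule.starProjection_apply_mem _ x)]
  conv_lhs => rw [← (ℝ ∙ a).starProjection_add_starProjection_orthogonal x]
  rw [hP, inner_add_left, Submodule.starProjection_singleton, real_inner_smul_left,
    RCLike.ofReal_real_eq_id, id]
  ring

theorem norm_sq_eq_add_norm_sq_starProjection_orthogonal (a x : E) :
    ‖x‖ ^ 2 = ⟪a, x⟫ ^ 2 / ‖a‖ ^ 2 + ‖(ℝ ∙ a)ᗮ.starProjection x‖ ^ 2 := by
  simpa only [real_inner_self_eq_norm_sq, sq] using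
    real_inner_eq_add_inner_starProjection_orthogonal a x x

theorem real_inner_le_of_norm_eq_one_of_inner_eq {a x : E} {l : ℝ} (hx : ‖x‖ = 1)
    (hax : ⟪a, x⟫ = l) (w : E) :
    ⟪x, w⟫ ≤ l * ⟪a, w⟫ / ‖a‖ ^ 2 +
      √(1 - l ^ 2 / ‖a‖ ^ 2) * ‖(ℝ ∙ a)ᗮ.starProjection w‖ := by
  have hPx : ‖(ℝ ∙ a)ᗮ.starProjection x‖ = √(1 - l ^ 2 / ‖a‖ ^ 2) := by
    have := norm_sq_eq_add_norm_sq_starProjection_orthogonal a x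
    rw [hx, hax] at this
    rw [← Real.sqrt_sq (norm_nonneg _)]
    congr 1
    linarith
  calc ⟪x, w⟫
      = l * ⟪a, w⟫ / ‖a‖ ^ 2 + ⟪(ℝ ∙ a)ᗮ.starProjection x, (ℝ ∙ a)ᗮ.starProjection w⟫ := by
        rw [real_inner_eq_add_inner_starProjection_orthogonal a, hax]
    _ ≤ l * ⟪a, w⟫ / ‖a‖ ^ 2 +
          ‖(ℝ ∙ a)ᗮ.starProjection x‖ * ‖(ℝ ∙ a)ᗮ.starProjection w‖ := by
        gcongr
        exact real_inner_le_norm _ _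
    _ = _ := by rw [hPx]

theorem exists_norm_eq_one_inner_eq_and_inner_eq {a : E} (hE : (ℝ ∙ a)ᗮ ≠ ⊥) {l : ℝ}
    (hl : l ^ 2 ≤ ‖a‖ ^ 2) (w : E) :
    ∃ x : E, ‖x‖ = 1 ∧ ⟪a, x⟫ = l ∧ ⟪x, w⟫ = l * ⟪a, w⟫ / ‖a‖ ^ 2 +
      √(1 - l ^ 2 / ‖a‖ ^ 2) * ‖(ℝ ∙ a)ᗮ.starProjection w‖ := by
  set s := √(1 - l ^ 2 / ‖a‖ ^ 2)
  have hs : s ^ 2 = 1 - l ^ 2 / ‖a‖ ^ 2 :=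
    Real.sq_sqrt (sub_nonneg.mpr (div_le_one_of_le₀ hl (sq_nonneg _)))
  obtain ⟨u, hu, hu1, huw⟩ := Submodule.exists_norm_eq_one_inner_eq_norm hE
    ((ℝ ∙ a)ᗮ.starProjection_apply_mem w)
  have hau : ⟪a, u⟫ = 0 := Submodule.mem_orthogonal_singleton_iff_inner_right.mp hu
  set x := (l / ‖a‖ ^ 2) • a + s • u
  have hax : ⟪a, x⟫ = l := by
    rw [inner_add_right, real_inner_smul_right, real_inner_smul_right, hau,
      real_inner_self_eq_norm_sq]
    rcases eq_or_ne ‖a‖ 0 with ha | ha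
    · rw [ha, zero_pow two_ne_zero] at hl ⊢
      simp [pow_eq_zero_iff two_ne_zero |>.mp (le_antisymm hl (sq_nonneg l))]
    · field_simp
      ring
  have hPx : (ℝ ∙ a)ᗮ.starProjection x = s • u := by
    rw [map_add, map_smul, map_smul,
      Submodule.starProjection_orthogonalComplement_singleton_eq_zero, Submodule.starProjection_eq_self_iff.mpr hu, smul_zero, zero_add]
  refine ⟨x, ?_, hax, ?_⟩
  · have := norm_sq_eq_add_norm_sq_starProjection_orthogonal a x
    rw [hax, hPx, norm_smul, mul_pow, hu1, Real.norm_eq_abs, sq_abs, hs] at this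
    exact (pow_eq_one_iff_of_nonneg (norm_nonneg x) two_ne_zero).mp (by linarith)
  · rw [real_inner_eq_add_inner_starProjection_orthogonal a, hax, hPx, real_inner_smul_left, huw]

theorem isGreatest_inner_on_sphere_inter_hyperplane {a : E} (hE : (ℝ ∙ a)ᗮ ≠ ⊥) {l : ℝ}
    (hl : l ^ 2 ≤ ‖a‖ ^ 2) (w : E) :
    IsGreatest ((fun x => ⟪x, w⟫) '' {x | ‖x‖ = 1 ∧ ⟪a, x⟫ = l})
      (l * ⟪a, w⟫ / ‖a‖ ^ 2 + √(1 - l ^ 2 / ‖a‖ ^ 2) * ‖(ℝ ∙ a)ᗮ.starProjection w‖) := by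
  obtain ⟨x, hx, hax, hxw⟩ := exists_norm_eq_one_inner_eq_and_inner_eq hE hl w
  refine ⟨⟨x, ⟨hx, hax⟩, hxw⟩, ?_⟩
  rintro _ ⟨y, ⟨hy, hay⟩, rfl⟩
  exact real_inner_le_of_norm_eq_one_of_inner_eq hy hay w

theorem max_scalar_product_on_sphere_slice_general {K : ℕ} (hK : 2 ≤ K)
    (a w : EuclideanSpace ℝ (Fin K))
    (l : ℝ) (hl : l ^ 2 ≤ ‖a‖ ^ 2) (e : ℝ) (he : e = 1 ∨ e = -1) :
    IsGreatest ((fun x => e * (inner ℝ x w : ℝ)) ''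
        {x : EuclideanSpace ℝ (Fin K) | ‖x‖ = 1 ∧ (inner ℝ a x : ℝ) = l})
      (e * (l * (inner ℝ a w : ℝ) / ‖a‖ ^ 2) +
        Real.sqrt (1 - l ^ 2 / ‖a‖ ^ 2) *
          ‖(Submodule.orthogonalProjectionOnto ((ℝ ∙ a)ᗮ) w : EuclideanSpace ℝ (Fin K))‖) := by
  have habs : |e| = 1 := by rcases he with rfl | rfl <;> simp
  have hE : (ℝ ∙ a)ᗮ ≠ ⊥ := orthogonal_span_singleton_ne_bot (by simpa using hK) a
  have := isGreatest_inner_on_sphere_inter_hyperplane hE hl (e • w)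
  simp only [real_inner_smul_right, map_smul, norm_smul, Real.norm_eq_abs, habs, one_mul] at this
  convert this using 2
  · ring
  · rfl

/-- Lemma lemma:maxScalarProduct, part a). -/
theorem max_scalar_product_on_sphere_slice {K : ℕ} (hK : 2 ≤ K)
    (a w : EuclideanSpace ℝ (Fin K)) (ha : a ≠ 0)
    (l : ℝ) (hl : l ^ 2 ≤ ‖a‖ ^ 2) (e : ℝ) (he : e = 1 ∨ e = -1) :
    IsGreatest ((fun x => e * (inner ℝ x w : ℝ)) ''
        {x : EuclideanSpace ℝ (Fin K) | ‖x‖ = 1 ∧ (inner ℝ a x : ℝ) = l})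
      (e * (l * (inner ℝ a w : ℝ) / ‖a‖ ^ 2) +
        Real.sqrt (1 - l ^ 2 / ‖a‖ ^ 2) *
          ‖(Submodule.orthogonalProjectionOnto ((ℝ ∙ a)ᗮ) w : EuclideanSpace ℝ (Fin K))‖) :=
  max_scalar_product_on_sphere_slice_general hK a w l hl e he
end

section
/- Let K ≥ 2, let a, w ∈ ℝ^K (Euclidean space) with a ≠ 0, and let l ∈ ℝ with l² ≤ ‖a‖². Let P_E denote the orthogonal projection onto the hyperplane E = {x ∈ ℝ^K : ⟨a, x⟩ = 0} (the orthogonal complement of the span of a). Then |l·⟨a, w⟩/‖a‖²| + √(1 − l²/‖a‖²)·‖P_E w‖ is the maximum (attained supremum) of |⟨x, w⟩| over the set {x ∈ ℝ^K : ‖x‖ = 1 and ⟨a, x⟩ = l}. (Paper: Lemma lemma:maxScalarProduct, part b).) -/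
/-!
Write a point of the slice as `x = (l / ‖a‖²) • a + y` with `y ⊥ a`. By Pythagoras, `y` runs
exactly over the sphere of radius `√(1 - l² / ‖a‖²)` in `(ℝ ∙ a)ᗮ`, and
`⟪x, w⟫ = l ⟪a, w⟫ / ‖a‖² + ⟪y, P w⟫` with `P` the projection onto `(ℝ ∙ a)ᗮ`. Cauchy–Schwarz
bounds the second term by the radius times `‖P w‖`, with equality for `y` along `± P w`
(along any unit vector when `P w = 0`), the sign chosen to match the first term.
-/

open Set Submodule Module RealInnerProductSpace

section SphereSlice

variable {E : Type*} [NormedAddCommGroup E] [InnerProductSpace ℝ E]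

theorem exists_norm_eq_one_inner_eq_norm [Nontrivial E] (v : E) :
    ∃ u : E, ‖u‖ = 1 ∧ ⟪u, v⟫ = ‖v‖ := by
  rcases eq_or_ne v 0 with rfl | hv
  · obtain ⟨u, hu⟩ := exists_norm_eq E zero_le_one
    exact ⟨u, hu, by simp⟩
  · refine ⟨‖v‖⁻¹ • v, by simp [norm_smul, hv], ?_⟩
    rw [real_inner_smul_left, real_inner_self_eq_norm_sq]
    field_simp

theorem isGreatest_abs_add_inner_sphere [Nontrivial E] (α : ℝ) (v : E) {r : ℝ} (hr : 0 ≤ r) :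
    IsGreatest ((fun y => |α + ⟪y, v⟫|) '' Metric.sphere 0 r) (|α| + r * ‖v‖) := by
  constructor
  · obtain ⟨u, hu, huv⟩ := exists_norm_eq_one_inner_eq_norm v
    have hru : r • u ∈ Metric.sphere (0 : E) r := by
      simp [norm_smul, hu, abs_of_nonneg hr]
    have hrv : 0 ≤ r * ‖v‖ := by positivity
    rcases le_or_gt 0 α with hα | hα
    · refine ⟨r • u, hru, ?_⟩
      simp only [real_inner_smul_left, huv]
      rw [abs_of_nonneg hα, abs_of_nonneg (by linarith)]
    · refine ⟨-(r • u), by simpa using hru, ?_⟩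
      simp only [inner_neg_left, real_inner_smul_left, huv]
      rw [abs_of_neg hα, abs_of_nonpos (by linarith)]
      ring
  · rintro _ ⟨y, hy, rfl⟩
    rw [mem_sphere_zero_iff_norm] at hy
    calc |α + ⟪y, v⟫| ≤ |α| + |⟪y, v⟫| := abs_add_le _ _
      _ ≤ |α| + r * ‖v‖ := by
        gcongr
        exact hy ▸ abs_real_inner_le_norm y v

theorem norm_smul_add_sq_of_mem_orthogonal_singleton {a y : E} (hy : y ∈ (ℝ ∙ a)ᗮ) (c : ℝ) :
    ‖c • a + y‖ ^ 2 = c ^ 2 * ‖a‖ ^ 2 + ‖y‖ ^ 2 := by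
  rw [mem_orthogonal_singleton_iff_inner_right] at hy
  rw [norm_add_sq_real, real_inner_smul_left, hy, norm_smul, Real.norm_eq_abs, mul_pow, sq_abs]
  ring

theorem inner_smul_add_of_mem_orthogonal_singleton {a y : E} (hy : y ∈ (ℝ ∙ a)ᗮ) (c : ℝ) :
    ⟪a, c • a + y⟫ = c * ‖a‖ ^ 2 := by
  rw [mem_orthogonal_singleton_iff_inner_right] at hy
  rw [inner_add_right, real_inner_smul_right, hy, real_inner_self_eq_norm_sq, add_zero]

theorem inner_smul_add_orthogonal_singleton (a : E) (c : ℝ) (y : (ℝ ∙ a)ᗮ) (w : E) :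
    ⟪c • a + y, w⟫ = c * ⟪a, w⟫ + ⟪y, (ℝ ∙ a)ᗮ.orthogonalProjectionOnto w⟫ := by
  rw [inner_add_left, real_inner_smul_left, inner_orthogonalProjectionOnto_eq_of_mem_left]

theorem setOf_norm_eq_one_and_inner_eq {a : E} (ha : a ≠ 0) {l : ℝ} (hl : l ^ 2 ≤ ‖a‖ ^ 2) :
    {x : E | ‖x‖ = 1 ∧ ⟪a, x⟫ = l} =
      (fun y : (ℝ ∙ a)ᗮ => (l / ‖a‖ ^ 2) • a + y) '' Metric.sphere 0 √(1 - l ^ 2 / ‖a‖ ^ 2) := by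
  have ha2 : ‖a‖ ^ 2 ≠ 0 := by positivity
  have hr : 0 ≤ 1 - l ^ 2 / ‖a‖ ^ 2 := by
    rw [sub_nonneg, div_le_one (by positivity)]
    exact hl
  ext x
  constructor
  · rintro ⟨hx1, hxa⟩
    have hy : x - (l / ‖a‖ ^ 2) • a ∈ (ℝ ∙ a)ᗮ := by
      rw [mem_orthogonal_singleton_iff_inner_right, inner_sub_right, real_inner_smul_right, hxa,
        real_inner_self_eq_norm_sq, div_mul_cancel₀ l ha2, sub_self]
    refine ⟨⟨_, hy⟩, ?_, add_sub_cancel _ _⟩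
    have hpyth := norm_smul_add_sq_of_mem_orthogonal_singleton hy (l / ‖a‖ ^ 2)
    rw [add_sub_cancel, hx1] at hpyth
    rw [mem_sphere_zero_iff_norm, coe_norm, ← Real.sqrt_sq (norm_nonneg _)]
    congr 1
    field_simp at hpyth ⊢
    linarith
  · rintro ⟨y, hy, rfl⟩
    rw [mem_sphere_zero_iff_norm, coe_norm] at hy
    refine ⟨?_, ?_⟩
    · rw [← pow_eq_one_iff_of_nonneg (norm_nonneg _) two_ne_zero,
        norm_smul_add_sq_of_mem_orthogonal_singleton y.2, hy, Real.sq_sqrt hr]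
      field_simp
      ring
    · rw [inner_smul_add_of_mem_orthogonal_singleton y.2, div_mul_cancel₀ l ha2]

theorem nontrivial_orthogonal_span_singleton [FiniteDimensional ℝ E] (hE : 2 ≤ finrank ℝ E)
    {a : E} (ha : a ≠ 0) : Nontrivial (ℝ ∙ a)ᗮ := by
  have hdim := (ℝ ∙ a).finrank_add_finrank_orthogonal
  rw [finrank_span_singleton ha] at hdim
  exact nontrivial_of_finrank_pos (R := ℝ) (by omega)

end SphereSlice

/-- Lemma lemma:maxScalarProduct, part b). -/
theorem max_abs_scalar_product_on_sphere_slice {K : ℕ} (hK : 2 ≤ K)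
    (a w : EuclideanSpace ℝ (Fin K)) (ha : a ≠ 0)
    (l : ℝ) (hl : l ^ 2 ≤ ‖a‖ ^ 2) :
    IsGreatest ((fun x => |(inner ℝ x w : ℝ)|) ''
        {x : EuclideanSpace ℝ (Fin K) | ‖x‖ = 1 ∧ (inner ℝ a x : ℝ) = l})
      (|l * (inner ℝ a w : ℝ) / ‖a‖ ^ 2| +
        Real.sqrt (1 - l ^ 2 / ‖a‖ ^ 2) *
          ‖(Submodule.orthogonalProjectionOnto ((ℝ ∙ a)ᗮ) w : EuclideanSpace ℝ (Fin K))‖) := by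
  have : Nontrivial (ℝ ∙ a)ᗮ := nontrivial_orthogonal_span_singleton (by simpa using hK) ha
  rw [setOf_norm_eq_one_and_inner_eq ha hl, image_image, mul_div_right_comm]
  simp only [inner_smul_add_orthogonal_singleton]
  exact isGreatest_abs_add_inner_sphere _ _ (Real.sqrt_nonneg _)
end

section
/- Let μ̂, q⁻, q⁺ : S → ℝ, τ > 0, η > 0, let C⁻, C⁺ be sets of functions S → ℝ, and set G(s) = (μ̂(s) − μ(s))/(τ·σ(s)). Assume: (a) G(s) > −q⁻(s) for every s ∈ μ⁻¹_{C⁻₊η}; (b) G(s) < q⁺(s) for every s ∈ μ⁻¹_{C⁺₋η}; (c) −q⁻(s) − η/(τ·𝔒) < G(s) < q⁺(s) + η/(τ·𝔒) for every s ∈ S. Then for every c⁻ ∈ Γ(C⁻) and every c⁺ ∈ Γ(C⁺): {s : μ̂(s) < c⁻(s) − q⁻(s)·τ·σ(s)} ⊆ {s : μ(s) < c⁻(s)} and {s : μ̂(s) > c⁺(s) + q⁺(s)·τ·σ(s)} ⊆ {s : μ(s) > c⁺(s)}. (Paper: deterministic lower-bound step underlying Proposition prop:NonAsymMetaTheorem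 and the SCoPE Set Metatheorem.) -/
/-- Deterministic lower-bound step underlying Proposition prop:NonAsymMetaTheorem
and the SCoPE Set Metatheorem. -/
theorem scope_inclusions_of_zone_bounds {S : Type*} [MetricSpace S]
    (μ σ μhat qm qp : S → ℝ) (o O τ η : ℝ)
    (ho : 0 < o) (hσo : ∀ s, o ≤ σ s) (hσO : ∀ s, σ s ≤ O)
    (hμbd : ∃ M, ∀ s, |μ s| ≤ M)
    (hτ : 0 < τ) (hη : 0 < η)
    (Cm Cp : Set (S → ℝ))
    (ha : ∀ s, (∃ c ∈ Cm, 0 ≤ μ s - c s ∧ μ s - c s ≤ η) →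
      (μhat s - μ s) / (τ * σ s) > -(qm s))
    (hb : ∀ s, (∃ c ∈ Cp, 0 ≤ c s - μ s ∧ c s - μ s ≤ η) →
      (μhat s - μ s) / (τ * σ s) < qp s)
    (hc : ∀ s, -(qm s) - η / (τ * O) < (μhat s - μ s) / (τ * σ s) ∧
      (μhat s - μ s) / (τ * σ s) < qp s + η / (τ * O)) :
    ∀ cm cp : S → ℝ, (∀ s, ∃ c ∈ Cm, cm s = c s) → (∀ s, ∃ c ∈ Cp, cp s = c s) →
      {s | μhat s < cm s - qm s * τ * σ s} ⊆ {s | μ s < cm s} ∧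
      {s | μhat s > cp s + qp s * τ * σ s} ⊆ {s | μ s > cp s} := by
  intro cm cp hcm hcp
  constructor
  · intro s hs
    simp only [Set.mem_setOf_eq] at hs ⊢
    have hσs : 0 < σ s := lt_of_lt_of_le ho (hσo s)
    have hO : 0 < O := lt_of_lt_of_le hσs (hσO s)
    have hts : 0 < τ * σ s := mul_pos hτ hσs
    by_contra h
    push_neg at h
    by_cases hle : μ s - cm s ≤ η
    · obtain ⟨c, hcC, hcs⟩ := hcm s
      have hG := ha s ⟨c, hcC, by rw [← hcs]; linarith, by rw [← hcs]; linarith⟩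
      rw [gt_iff_lt, lt_div_iff₀ hts] at hG
      linarith
    · have hG := (hc s).1
      rw [lt_div_iff₀ hts] at hG
      have key : η / (τ * O) * (τ * σ s) ≤ η := by
        rw [div_mul_eq_mul_div, div_le_iff₀ (by positivity)]
        exact mul_le_mul_of_nonneg_left (mul_le_mul_of_nonneg_left (hσO s) hτ.le) hη.le
      linarith
  · intro s hs
    simp only [Set.mem_setOf_eq] at hs ⊢
    have hσs : 0 < σ s := lt_of_lt_of_le ho (hσo s)
    have hO : 0 < O := lt_of_lt_of_le hσs (hσO s)
    have hts : 0 < τ * σ s := mul_pos hτ hσs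
    by_contra h
    push_neg at h
    by_cases hle : cp s - μ s ≤ η
    · obtain ⟨c, hcC, hcs⟩ := hcp s
      have hG := hb s ⟨c, hcC, by rw [← hcs]; linarith, by rw [← hcs]; linarith⟩
      rw [div_lt_iff₀ hts] at hG
      linarith
    · have hG := (hc s).2
      rw [div_lt_iff₀ hts] at hG
      have key : η / (τ * O) * (τ * σ s) ≤ η := by
        rw [div_mul_eq_mul_div, div_le_iff₀ (by positivity)]
        exact mul_le_mul_of_nonneg_left (mul_le_mul_of_nonneg_left (hσO s) hτ.le) hη.le
      linarith
end

section
/- Let (Ω, 𝔉, P) be a probability space, (τ_N) positive with τ_N → 0, (η_N) positive with η_N → 0 and η_N/τ_N → ∞, η̃ > 0, q⁻, q⁺ : S → ℝ bounded, C⁻, C⁺ sets of functions S → ℝ with C = C⁻ ∪ C⁺, and μ̂_N : Ω → (S → ℝ) arbitrary maps; write G_N(ω, s) = (μ̂_N(ω, s) − μ(s))/(τ_N·σ(s)). Assume: (i) for every ε > 0 there is M > 0 with liminf_N P_*({ω : −q⁻(s) − M ≤ G_N(ω, s) ≤ q⁺(s) + M for all s ∈ μ⁻¹_{C_η̃}})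 ≥ 1 − ε; (ii) there exist K > 0 and maps Z_N : Ω → (S → ℝ) such that for every ω, every N, every c ∈ C and every s ∉ μ⁻¹_{C_η̃}: (μ̂_N(ω, s) − c(s))·sgn(μ(s) − c(s)) ≥ σ(s)·(K + Z_N(ω, s)), and for every ε > 0 there is M > 0 with liminf_N P_*({ω : Z_N(ω, s)/τ_N ≥ −M for all s ∈ S}) ≥ 1 − ε. Define E_incl(N) = {ω : for all c⁻ ∈ Γ(C⁻) and c⁺ ∈ Γ(C⁺), {s : μ̂_N(ω, s) < c⁻(s) − q⁻(s)·τ_N·σ(s)} ⊆ {s : μ(s) < c⁻(s)} and {s : μ̂_N(ω, s) > c⁺(s) + q⁺(s)·τ_N·σ(s)} ⊆ {s : μ(s) > c⁺(s)}}, and E_zone(N) = {ω : G_N(ω, s) > −q⁻(s) for all s ∈ μ⁻¹_{C⁻₊η_N} and G_N(ω, s) < q⁺(s) for all s ∈ μ⁻¹_{C⁺₋η_N}}. Then liminf_N P_*(E_incl(N)) ≥ liminf_N P_*(E_zone(N)). (Paper: lower-bound part of the SCoPE Set Metatheorem (Theorem thm:SCoPESMetatheorem, claim 1), with its tightness hypotheses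 stated explicitly.) -/
open MeasureTheory Filter

/-- Outer probability of an arbitrary (not necessarily measurable) set. -/
noncomputable def outerProb {Ω : Type*} [MeasurableSpace Ω] (P : Measure Ω) (A : Set Ω) : ℝ :=
  (P A).toReal

/-- Inner probability of an arbitrary (not necessarily measurable) set. -/
noncomputable def innerProb {Ω : Type*} [MeasurableSpace Ω] (P : Measure Ω) (A : Set Ω) : ℝ :=
  1 - (P Aᶜ).toReal

lemma innerProb_nonneg {Ω : Type*} [MeasurableSpace Ω] (P : Measure Ω) [IsProbabilityMeasure P]
    (A : Set Ω) : 0 ≤ innerProb P A := by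
  have h1 : (P Aᶜ).toReal ≤ 1 := by
    simpa using ENNReal.toReal_mono ENNReal.one_ne_top (prob_le_one (μ := P) (s := Aᶜ))
  simp only [innerProb]; linarith

lemma innerProb_le_one {Ω : Type*} [MeasurableSpace Ω] (P : Measure Ω) [IsProbabilityMeasure P]
    (A : Set Ω) : innerProb P A ≤ 1 := by
  have : 0 ≤ (P Aᶜ).toReal := ENNReal.toReal_nonneg
  simp only [innerProb]; linarith

lemma innerProb_triple {Ω : Type*} [MeasurableSpace Ω] (P : Measure Ω) [IsProbabilityMeasure P]
    {A B E F : Set Ω} (h : A ∩ B ∩ E ⊆ F) :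
    innerProb P E - (1 - innerProb P A) - (1 - innerProb P B) ≤ innerProb P F := by
  have hFc : Fᶜ ⊆ Aᶜ ∪ Bᶜ ∪ Eᶜ := by
    have := Set.compl_subset_compl.mpr h
    rwa [Set.compl_inter, Set.compl_inter] at this
  have h1 : P Fᶜ ≤ P Aᶜ + P Bᶜ + P Eᶜ := by
    refine (measure_mono hFc).trans ?_
    refine (measure_union_le _ _).trans ?_
    gcongr
    exact measure_union_le _ _
  have h2 : (P Fᶜ).toReal ≤ (P Aᶜ).toReal + (P Bᶜ).toReal + (P Eᶜ).toReal := by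
    calc (P Fᶜ).toReal ≤ (P Aᶜ + P Bᶜ + P Eᶜ).toReal := by
          refine ENNReal.toReal_mono ?_ h1
          finiteness
      _ = (P Aᶜ).toReal + (P Bᶜ).toReal + (P Eᶜ).toReal := by
          rw [ENNReal.toReal_add (by finiteness) (by finiteness),
            ENNReal.toReal_add (by finiteness) (by finiteness)]
  simp only [innerProb]
  linarith

/-- Lower-bound part of the SCoPE Set Metatheorem (Theorem thm:SCoPESMetatheorem,
claim 1), with its tightness hypotheses stated explicitly. -/
theorem scope_metatheorem_lower_bound
    {Ω : Type*} [MeasurableSpace Ω] (P : Measure Ω) [IsProbabilityMeasure P]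
    {S : Type*} [MetricSpace S]
    (μ σ : S → ℝ) (o O : ℝ)
    (ho : 0 < o) (hσo : ∀ s, o ≤ σ s) (hσO : ∀ s, σ s ≤ O)
    (hμbd : ∃ M, ∀ s, |μ s| ≤ M)
    (τ η : ℕ → ℝ) (hτpos : ∀ N, 0 < τ N) (hτ0 : Tendsto τ atTop (nhds 0))
    (hηpos : ∀ N, 0 < η N) (hη0 : Tendsto η atTop (nhds 0))
    (hratio : Tendsto (fun N => η N / τ N) atTop atTop)
    (ηt : ℝ) (hηt : 0 < ηt)
    (qm qp : S → ℝ) (hqm : ∃ M, ∀ s, |qm s| ≤ M) (hqp : ∃ M, ∀ s, |qp s| ≤ M)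
    (Cm Cp : Set (S → ℝ))
    (μhat : ℕ → Ω → S → ℝ)
    (htight : ∀ ε > (0 : ℝ), ∃ M > (0 : ℝ), (1 : ℝ) - ε ≤
      liminf (fun N => innerProb P {ω : Ω |
        ∀ s, (∃ c ∈ Cm ∪ Cp, |μ s - c s| ≤ ηt) →
          (-(qm s) - M ≤ (μhat N ω s - μ s) / (τ N * σ s) ∧
            (μhat N ω s - μ s) / (τ N * σ s) ≤ qp s + M)}) atTop)
    (hfar : ∃ K > (0 : ℝ), ∃ Z : ℕ → Ω → S → ℝ,
      (∀ ω N, ∀ c ∈ Cm ∪ Cp, ∀ s, ¬(∃ c' ∈ Cm ∪ Cp, |μ s - c' s| ≤ ηt) →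
        (μhat N ω s - c s) * Real.sign (μ s - c s) ≥ σ s * (K + Z N ω s)) ∧
      (∀ ε > (0 : ℝ), ∃ M > (0 : ℝ), (1 : ℝ) - ε ≤
        liminf (fun N => innerProb P {ω : Ω | ∀ s, Z N ω s / τ N ≥ -M}) atTop)) :
    liminf (fun N => innerProb P {ω : Ω |
        (∀ s, (∃ c ∈ Cm, 0 ≤ μ s - c s ∧ μ s - c s ≤ η N) →
          (μhat N ω s - μ s) / (τ N * σ s) > -(qm s)) ∧
        (∀ s, (∃ c ∈ Cp, 0 ≤ c s - μ s ∧ c s - μ s ≤ η N) →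
          (μhat N ω s - μ s) / (τ N * σ s) < qp s)}) atTop ≤
      liminf (fun N => innerProb P {ω : Ω | ∀ cm cp : S → ℝ,
        (∀ s, ∃ c ∈ Cm, cm s = c s) → (∀ s, ∃ c ∈ Cp, cp s = c s) →
        {s | μhat N ω s < cm s - qm s * τ N * σ s} ⊆ {s | μ s < cm s} ∧
        {s | μhat N ω s > cp s + qp s * τ N * σ s} ⊆ {s | μ s > cp s}}) atTop := by
  classical
  obtain ⟨K, hK, Z, hZfar, hZtight⟩ := hfar
  obtain ⟨M1, hM1⟩ := hqm
  obtain ⟨M2, hM2⟩ := hqp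
  set Mq : ℝ := max (max M1 M2) 0 with hMqdef
  have hMq0 : 0 ≤ Mq := le_max_right _ _
  have hqmb : ∀ s, |qm s| ≤ Mq := fun s =>
    (hM1 s).trans (le_max_of_le_left (le_max_left _ _))
  have hqpb : ∀ s, |qp s| ≤ Mq := fun s =>
    (hM2 s).trans (le_max_of_le_left (le_max_right _ _))
  have hσpos : ∀ s, 0 < σ s := fun s => ho.trans_le (hσo s)
  have hτσ : ∀ N s, 0 < τ N * σ s := fun N s => mul_pos (hτpos N) (hσpos s)
  -- Name the two sequences in the goal.
  set EZ : ℕ → Set Ω := fun N => {ω : Ω |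
      (∀ s, (∃ c ∈ Cm, 0 ≤ μ s - c s ∧ μ s - c s ≤ η N) →
        (μhat N ω s - μ s) / (τ N * σ s) > -(qm s)) ∧
      (∀ s, (∃ c ∈ Cp, 0 ≤ c s - μ s ∧ c s - μ s ≤ η N) →
        (μhat N ω s - μ s) / (τ N * σ s) < qp s)} with hEZdef
  set EF : ℕ → Set Ω := fun N => {ω : Ω | ∀ cm cp : S → ℝ,
      (∀ s, ∃ c ∈ Cm, cm s = c s) → (∀ s, ∃ c ∈ Cp, cp s = c s) →
      {s | μhat N ω s < cm s - qm s * τ N * σ s} ⊆ {s | μ s < cm s} ∧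
      {s | μhat N ω s > cp s + qp s * τ N * σ s} ⊆ {s | μ s > cp s}} with hEFdef
  set uE : ℕ → ℝ := fun N => innerProb P (EZ N) with huEdef
  set uF : ℕ → ℝ := fun N => innerProb P (EF N) with huFdef
  -- boundedness facts
  have hbddF_above : IsBoundedUnder (· ≤ ·) atTop uF :=
    isBoundedUnder_of ⟨1, fun N => innerProb_le_one P _⟩
  have hcobF : IsCoboundedUnder (· ≥ ·) atTop uF :=
    hbddF_above.isCoboundedUnder_ge
  set L : ℝ := liminf uE atTop with hLdef
  -- it suffices to prove L - ε ≤ liminf uF for every ε > 0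
  refine le_of_forall_sub_le ?_
  intro ε hε
  have hε6 : (0:ℝ) < ε / 6 := by linarith
  obtain ⟨M, hM, htightM⟩ := htight (ε / 6) hε6
  obtain ⟨M', hM', hZM⟩ := hZtight (ε / 6) hε6
  set As : ℕ → Set Ω := fun N => {ω : Ω |
      ∀ s, (∃ c ∈ Cm ∪ Cp, |μ s - c s| ≤ ηt) →
        (-(qm s) - M ≤ (μhat N ω s - μ s) / (τ N * σ s) ∧
          (μhat N ω s - μ s) / (τ N * σ s) ≤ qp s + M)} with hAsdef
  set Bs : ℕ → Set Ω := fun N => {ω : Ω | ∀ s, Z N ω s / τ N ≥ -M'} with hBsdef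
  set uA : ℕ → ℝ := fun N => innerProb P (As N) with huAdef
  set uB : ℕ → ℝ := fun N => innerProb P (Bs N) with huBdef
  -- key pointwise inclusion
  have key : ∀ N, M * O * τ N ≤ η N → (Mq + M') * τ N ≤ K →
      As N ∩ Bs N ∩ EZ N ⊆ EF N := by
    intro N hc1 hc2 ω hω
    obtain ⟨⟨hA, hB⟩, hEz⟩ := hω
    simp only [hAsdef, Set.mem_setOf_eq] at hA
    simp only [hBsdef, Set.mem_setOf_eq] at hB
    simp only [hEZdef, Set.mem_setOf_eq] at hEz
    simp only [hEFdef, Set.mem_setOf_eq]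
    intro cm cp hcm hcp
    constructor
    · -- lower inclusion
      intro s hs
      simp only [Set.mem_setOf_eq] at hs ⊢
      by_contra hcon
      push_neg at hcon  -- cm s ≤ μ s
      obtain ⟨c, hcCm, hceq⟩ := hcm s
      rw [hceq] at hs hcon
      -- hs : μhat N ω s < c s - qm s * τ N * σ s, hcon : c s ≤ μ s
      by_cases hnear : ∃ c' ∈ Cm ∪ Cp, |μ s - c' s| ≤ ηt
      · by_cases hsmall : μ s - c s ≤ η N
        · have hz := hEz.1 s ⟨c, hcCm, by linarith, hsmall⟩
          have hz' : -(qm s) * (τ N * σ s) < μhat N ω s - μ s :=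
            (lt_div_iff₀ (hτσ N s)).mp hz
          have hb : -(qm s) * (τ N * σ s) = -(qm s * τ N * σ s) := by ring
          linarith
        · push_neg at hsmall
          have hA' := (hA s hnear).1
          have hA'' : (-(qm s) - M) * (τ N * σ s) ≤ μhat N ω s - μ s :=
            (le_div_iff₀ (hτσ N s)).mp hA'
          have hMσ : M * (τ N * σ s) ≤ M * O * τ N := by
            have h1 : τ N * σ s ≤ τ N * O :=
              mul_le_mul_of_nonneg_left (hσO s) (hτpos N).le
            calc M * (τ N * σ s) ≤ M * (τ N * O) :=
                  mul_le_mul_of_nonneg_left h1 hM.le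
              _ = M * O * τ N := by ring
          have hb : (-(qm s) - M) * (τ N * σ s) =
              -(qm s * τ N * σ s) - M * (τ N * σ s) := by ring
          linarith
      · have hfar' := hZfar ω N c (Or.inl hcCm) s hnear
        have habs : ¬ |μ s - c s| ≤ ηt := fun hcontr => hnear ⟨c, Or.inl hcCm, hcontr⟩
        push_neg at habs
        have hpos : 0 < μ s - c s := by
          rcases abs_cases (μ s - c s) with ⟨he, _⟩ | ⟨he, _⟩
          · linarith [he ▸ habs]
          · linarith [he ▸ habs]
        rw [Real.sign_of_pos hpos, mul_one] at hfar'
        have hZ' : -M' * τ N ≤ Z N ω s :=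
          (le_div_iff₀ (hτpos N)).mp (hB s)
        have hq : -(qm s) ≤ Mq := by
          have := abs_le.mp (hqmb s); linarith
        have hKZ : Mq * τ N ≤ K + Z N ω s := by nlinarith
        have h6 : -(qm s) * τ N ≤ K + Z N ω s :=
          le_trans (mul_le_mul_of_nonneg_right hq (hτpos N).le) hKZ
        have h7 : σ s * (-(qm s) * τ N) ≤ σ s * (K + Z N ω s) :=
          mul_le_mul_of_nonneg_left h6 (hσpos s).le
        have hb : σ s * (-(qm s) * τ N) = -(qm s * τ N * σ s) := by ring
        linarith
    · -- upper inclusion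
      intro s hs
      simp only [Set.mem_setOf_eq] at hs ⊢
      by_contra hcon
      push_neg at hcon  -- μ s ≤ cp s
      obtain ⟨c, hcCp, hceq⟩ := hcp s
      rw [hceq] at hs hcon
      by_cases hnear : ∃ c' ∈ Cm ∪ Cp, |μ s - c' s| ≤ ηt
      · by_cases hsmall : c s - μ s ≤ η N
        · have hz := hEz.2 s ⟨c, hcCp, by linarith, hsmall⟩
          have hz' : μhat N ω s - μ s < qp s * (τ N * σ s) :=
            (div_lt_iff₀ (hτσ N s)).mp hz
          have hb : qp s * (τ N * σ s) = qp s * τ N * σ s := by ring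
          linarith
        · push_neg at hsmall
          have hA' := (hA s hnear).2
          have hA'' : μhat N ω s - μ s ≤ (qp s + M) * (τ N * σ s) :=
            (div_le_iff₀ (hτσ N s)).mp hA'
          have hMσ : M * (τ N * σ s) ≤ M * O * τ N := by
            have h1 : τ N * σ s ≤ τ N * O :=
              mul_le_mul_of_nonneg_left (hσO s) (hτpos N).le
            calc M * (τ N * σ s) ≤ M * (τ N * O) :=
                  mul_le_mul_of_nonneg_left h1 hM.le
              _ = M * O * τ N := by ring
          have hb : (qp s + M) * (τ N * σ s) =
              qp s * τ N * σ s + M * (τ N * σ s) := by ring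
          linarith
      · have hfar' := hZfar ω N c (Or.inr hcCp) s hnear
        have habs : ¬ |μ s - c s| ≤ ηt := fun hcontr => hnear ⟨c, Or.inr hcCp, hcontr⟩
        push_neg at habs
        have hneg : μ s - c s < 0 := by
          rcases abs_cases (μ s - c s) with ⟨he, _⟩ | ⟨he, _⟩
          · linarith [he ▸ habs]
          · linarith [he ▸ habs]
        rw [Real.sign_of_neg hneg, mul_neg_one] at hfar'
        -- hfar' : -(μhat N ω s - c s) ≥ σ s * (K + Z N ω s)
        have hZ' : -M' * τ N ≤ Z N ω s :=
          (le_div_iff₀ (hτpos N)).mp (hB s)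
        have hq : -(qp s) ≤ Mq := by
          have := abs_le.mp (hqpb s); linarith
        have hKZ : Mq * τ N ≤ K + Z N ω s := by nlinarith
        have h6 : -(qp s) * τ N ≤ K + Z N ω s :=
          le_trans (mul_le_mul_of_nonneg_right hq (hτpos N).le) hKZ
        have h7 : σ s * (-(qp s) * τ N) ≤ σ s * (K + Z N ω s) :=
          mul_le_mul_of_nonneg_left h6 (hσpos s).le
        have hb : σ s * (-(qp s) * τ N) = -(qp s * τ N * σ s) := by ring
        linarith
  -- eventual conditions
  have hcond1 : ∀ᶠ N in atTop, M * O * τ N ≤ η N := by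
    filter_upwards [hratio.eventually_ge_atTop (M * O)] with N hN
    exact (le_div_iff₀ (hτpos N)).mp hN
  have hcond2 : ∀ᶠ N in atTop, (Mq + M') * τ N ≤ K := by
    have h0 : Tendsto (fun N => (Mq + M') * τ N) atTop (nhds 0) := by
      simpa using hτ0.const_mul (Mq + M')
    filter_upwards [h0.eventually_lt_const hK] with N hN
    exact hN.le
  -- eventual probability bounds
  have hbddA : IsBoundedUnder (· ≥ ·) atTop uA :=
    isBoundedUnder_of ⟨0, fun N => innerProb_nonneg P _⟩
  have hbddB : IsBoundedUnder (· ≥ ·) atTop uB :=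
    isBoundedUnder_of ⟨0, fun N => innerProb_nonneg P _⟩
  have hbddE : IsBoundedUnder (· ≥ ·) atTop uE :=
    isBoundedUnder_of ⟨0, fun N => innerProb_nonneg P _⟩
  have hevA : ∀ᶠ N in atTop, 1 - ε / 3 < uA N := by
    refine eventually_lt_of_lt_liminf ?_ hbddA
    calc (1:ℝ) - ε / 3 < 1 - ε / 6 := by linarith
      _ ≤ liminf uA atTop := htightM
  have hevB : ∀ᶠ N in atTop, 1 - ε / 3 < uB N := by
    refine eventually_lt_of_lt_liminf ?_ hbddB
    calc (1:ℝ) - ε / 3 < 1 - ε / 6 := by linarith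
      _ ≤ liminf uB atTop := hZM
  have hevE : ∀ᶠ N in atTop, L - ε / 3 < uE N := by
    refine eventually_lt_of_lt_liminf ?_ hbddE
    simp only [hLdef]
    linarith
  -- combine
  have hfinal : ∀ᶠ N in atTop, L - ε ≤ uF N := by
    filter_upwards [hevA, hevB, hevE, hcond1, hcond2] with N hA hB hE h1 h2
    have hincl := key N h1 h2
    have := innerProb_triple P hincl
    have h3 : uE N - (1 - uA N) - (1 - uB N) ≤ uF N := this
    linarith
  exact le_liminf_of_le hcobF hfinal
end
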